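/- arXiv:2006.14831 — 4 statements merged into one kernel-verified Lean document; each statement's English description precedes it below -/
import Mathlib

section
/- The set classification Bayes discriminant g(x_1,...,x_m) = (1/m)log(π_1/π_2) + β_0 + β^T x̄ + (1/2)x̄^T ∇ x̄ + (1/2)tr(∇S) equals the average of the individual QDA discriminants: g(x_1,...,x_m) = (1/m)∑_{j=1}^m g_QDA(x_j), where g_QDA(x) = (1/m)log(π_1/π_2) + β_0 + β^T x + (1/2)x^T ∇ x (with constants as defined). -/
open Matrix BigOperators Real

lemma aux_sum {m : ℕ} (hm : (m:ℝ) ≠ 0) (u v : Fin m → ℝ) :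
    ∑ j, (u j - (∑ i, u i) / m) * (v j - (∑ i, v i) / m)
      = ∑ j, u j * v j - (∑ i, u i) * (∑ i, v i) / m := by
  have h : ∀ j, (u j - (∑ i, u i) / m) * (v j - (∑ i, v i) / m)
      = u j * v j - ((∑ i, v i) / m) * u j - ((∑ i, u i) / m) * v j
        + ((∑ i, u i) / m) * ((∑ i, v i) / m) := fun j => by ring
  simp_rw [h]
  rw [Finset.sum_add_distrib, Finset.sum_sub_distrib, Finset.sum_sub_distrib,
    ← Finset.mul_sum, ← Finset.mul_sum, Finset.sum_const, Finset.card_fin,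
    nsmul_eq_mul]
  field_simp
  ring

/-- The set-classification Bayes discriminant equals the average of the
individual QDA discriminants. -/
theorem stmt3 {p m : ℕ} (hm : 0 < m) (π1 π2 : ℝ) (hπ1 : 0 < π1) (hπ2 : 0 < π2)
    (μ1 μ2 : Fin p → ℝ) (S1 S2 : Matrix (Fin p) (Fin p) ℝ)
    (h1 : S1.PosDef) (h2 : S2.PosDef)
    (x : Fin m → Fin p → ℝ)
    (xbar : Fin p → ℝ) (hxbar : xbar = fun a => (∑ j, x j a) / m)
    (S : Matrix (Fin p) (Fin p) ℝ)
    (hS : S = Matrix.of fun a b => (∑ j, (x j a - xbar a) * (x j b - xbar b)) / m)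
    (β0 : ℝ)
    (hβ0 : β0 = (1 / 2) * (-Real.log (S1.det / S2.det)
      - μ1 ⬝ᵥ (S1⁻¹ *ᵥ μ1) + μ2 ⬝ᵥ (S2⁻¹ *ᵥ μ2)))
    (β : Fin p → ℝ) (hβ : β = S1⁻¹ *ᵥ μ1 - S2⁻¹ *ᵥ μ2)
    (nab : Matrix (Fin p) (Fin p) ℝ) (hnab : nab = S2⁻¹ - S1⁻¹)
    (gQDA : (Fin p → ℝ) → ℝ)
    (hg : gQDA = fun v => (1 / m : ℝ) * Real.log (π1 / π2) + β0 + β ⬝ᵥ v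
      + (1 / 2) * (v ⬝ᵥ (nab *ᵥ v))) :
    (1 / m : ℝ) * Real.log (π1 / π2) + β0 + β ⬝ᵥ xbar
        + (1 / 2) * (xbar ⬝ᵥ (nab *ᵥ xbar)) + (1 / 2) * (nab * S).trace =
      (1 / m : ℝ) * ∑ j, gQDA (x j) := by
  have hm' : (m:ℝ) ≠ 0 := Nat.cast_ne_zero.mpr hm.ne'
  have hxsum : ∀ a, ∑ j, x j a = m * xbar a := by
    intro a; rw [hxbar]; field_simp
  -- linear part
  have hlin : ∑ j, β ⬝ᵥ x j = m * (β ⬝ᵥ xbar) := by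
    simp only [dotProduct]
    rw [Finset.sum_comm, Finset.mul_sum]
    refine Finset.sum_congr rfl fun a _ => ?_
    rw [← Finset.mul_sum, hxsum a]; ring
  -- quadratic part
  have hquad : ∑ j, x j ⬝ᵥ (nab *ᵥ x j)
      = m * (xbar ⬝ᵥ (nab *ᵥ xbar)) + m * (nab * S).trace := by
    have hper : ∀ a b, ∑ j, x j a * x j b
        = m * (xbar a * xbar b) + m * (S a b) := by
      intro a b
      have := aux_sum hm' (fun j => x j a) (fun j => x j b)
      rw [hS]
      simp only [Matrix.of_apply]
      rw [hxbar] at *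
      simp only at this ⊢
      rw [this, hxsum a, hxsum b]
      have hx : ∀ a, (∑ j, x j a) / (m:ℝ) = ((fun a => (∑ j, x j a) / m) a) := fun _ => rfl
      field_simp
      ring
    simp only [dotProduct, Matrix.mulVec, dotProduct, Matrix.trace, Matrix.diag,
      Matrix.mul_apply, Finset.mul_sum]
    rw [Finset.sum_comm]
    rw [← Finset.sum_add_distrib]
    refine Finset.sum_congr rfl fun a _ => ?_
    simp_rw [← Finset.mul_sum]
    rw [Finset.mul_sum, Finset.mul_sum, Finset.mul_sum, ← Finset.sum_add_distrib]
    have hSsym : ∀ c d, S c d = S d c := by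
      intro c d; rw [hS]; simp only [Matrix.of_apply]
      congr 1; exact Finset.sum_congr rfl fun j _ => by ring
    simp_rw [Finset.mul_sum]
    rw [Finset.sum_comm]
    refine Finset.sum_congr rfl fun b _ => ?_
    have hb : ∑ j, x j a * (nab a b * x j b) = nab a b * ∑ j, x j a * x j b := by
      rw [Finset.mul_sum]; exact Finset.sum_congr rfl fun j _ => by ring
    rw [hb, hper a b, hSsym b a]; ring
  rw [hg]
  simp only
  rw [Finset.sum_add_distrib, Finset.sum_add_distrib, Finset.sum_const,
    Finset.card_fin, nsmul_eq_mul, hlin, ← Finset.mul_sum, hquad]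
  field_simp
  ring
end

section
/- For the entrywise hard-thresholding operator T_λ(A)_{ij} = A_{ij}·1{|A_{ij}| > λ}: if ‖A - B‖_∞ ≤ λ (entrywise sup-norm) and B has at most s nonzero entries, then ‖T_{λ'}(A) - B‖_∞ ≤ λ + λ' ≤ 2λ' for λ' ≥ λ, ‖T_{λ'}(A) - B‖_F ≤ 2√s λ', and supp(T_{λ'}(A)) ⊆ supp(B). -/
open Matrix BigOperators

/-- Entrywise hard thresholding operator. -/
noncomputable def hthresh {p : ℕ} (lam : ℝ) (A : Matrix (Fin p) (Fin p) ℝ) :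
    Matrix (Fin p) (Fin p) ℝ :=
  Matrix.of fun i j => if lam < |A i j| then A i j else 0

/-- Deterministic properties of hard thresholding: sup-norm bound, Frobenius
bound, and support recovery. -/
theorem stmt7 {p : ℕ} (A B : Matrix (Fin p) (Fin p) ℝ) (s : ℕ)
    (lam lam' : ℝ) (hlam : 0 < lam) (hlam' : lam ≤ lam')
    (hclose : ∀ i j, |A i j - B i j| ≤ lam)
    (hsparse : (Finset.univ.filter
      (fun ij : Fin p × Fin p => B ij.1 ij.2 ≠ 0)).card ≤ s) :
    (∀ i j, |hthresh lam' A i j - B i j| ≤ lam + lam') ∧ lam + lam' ≤ 2 * lam' ∧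
    Real.sqrt (∑ i, ∑ j, (hthresh lam' A i j - B i j) ^ 2) ≤
      2 * Real.sqrt s * lam' ∧
    (∀ i j, hthresh lam' A i j ≠ 0 → B i j ≠ 0) := by
  have hlam'pos : 0 < lam' := lt_of_lt_of_le hlam hlam'
  have hsup : ∀ i j, |hthresh lam' A i j - B i j| ≤ lam + lam' := by
    intro i j
    simp only [hthresh, Matrix.of_apply]
    split_ifs with h
    · linarith [hclose i j]
    · push_neg at h
      have h2 : |B i j| ≤ lam + lam' := by
        calc |B i j| = |(B i j - A i j) + A i j| := by ring_nf
          _ ≤ |B i j - A i j| + |A i j| := abs_add_le _ _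
          _ ≤ lam + lam' := by
              have := hclose i j
              rw [abs_sub_comm] at this
              linarith
      simpa using h2
  have hsupp : ∀ i j, hthresh lam' A i j ≠ 0 → B i j ≠ 0 := by
    intro i j hne hB
    simp only [hthresh, Matrix.of_apply] at hne
    split_ifs at hne with h
    · have := hclose i j
      rw [hB, sub_zero] at this
      linarith
    · exact hne rfl
  refine ⟨hsup, by linarith, ?_, hsupp⟩
  have hdiff0 : ∀ ij : Fin p × Fin p, B ij.1 ij.2 = 0 →
      (hthresh lam' A ij.1 ij.2 - B ij.1 ij.2) ^ 2 = 0 := by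
    intro ij hB
    have : hthresh lam' A ij.1 ij.2 = 0 := by
      by_contra h; exact hsupp _ _ h hB
    rw [this, hB]; ring
  have hsum : (∑ i, ∑ j, (hthresh lam' A i j - B i j) ^ 2) ≤ s * (2 * lam') ^ 2 := by
    have hrw : (∑ i, ∑ j, (hthresh lam' A i j - B i j) ^ 2)
        = ∑ ij : Fin p × Fin p, (hthresh lam' A ij.1 ij.2 - B ij.1 ij.2) ^ 2 :=
      (Fintype.sum_prod_type fun ij : Fin p × Fin p => (hthresh lam' A ij.1 ij.2 - B ij.1 ij.2) ^ 2).symm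
    rw [hrw]
    set S := Finset.univ.filter (fun ij : Fin p × Fin p => B ij.1 ij.2 ≠ 0) with hS
    have heq : (∑ ij ∈ (Finset.univ : Finset (Fin p × Fin p)),
        (hthresh lam' A ij.1 ij.2 - B ij.1 ij.2) ^ 2)
        = ∑ ij ∈ S, (hthresh lam' A ij.1 ij.2 - B ij.1 ij.2) ^ 2 := by
      refine (Finset.sum_subset (Finset.subset_univ S) ?_).symm
      intro ij _ hij
      simp only [hS, Finset.mem_filter, Finset.mem_univ, true_and, not_not] at hij
      exact hdiff0 ij hij
    rw [heq]
    calc ∑ ij ∈ S, (hthresh lam' A ij.1 ij.2 - B ij.1 ij.2) ^ 2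
        ≤ ∑ _ij ∈ S, (2 * lam') ^ 2 := by
          apply Finset.sum_le_sum
          intro ij _
          have h1 := hsup ij.1 ij.2
          have : |hthresh lam' A ij.1 ij.2 - B ij.1 ij.2| ≤ 2 * lam' := by linarith
          nlinarith [abs_nonneg (hthresh lam' A ij.1 ij.2 - B ij.1 ij.2),
            sq_abs (hthresh lam' A ij.1 ij.2 - B ij.1 ij.2)]
      _ = S.card * (2 * lam') ^ 2 := by rw [Finset.sum_const, nsmul_eq_mul]
      _ ≤ s * (2 * lam') ^ 2 := by
          apply mul_le_mul_of_nonneg_right _ (by positivity)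
          exact_mod_cast hsparse
  calc Real.sqrt (∑ i, ∑ j, (hthresh lam' A i j - B i j) ^ 2)
      ≤ Real.sqrt (s * (2 * lam') ^ 2) := Real.sqrt_le_sqrt hsum
    _ = Real.sqrt s * (2 * lam') := by
        rw [Real.sqrt_mul (by positivity), Real.sqrt_sq (by positivity)]
    _ = 2 * Real.sqrt s * lam' := by ring
end

section
/- Let Σ_1, Σ_2 be positive definite with eigenvalues in [C_e^{-1}, C_e], δ = μ_2 - μ_1, and ∇ = Σ_2^{-1} - Σ_1^{-1}. Then the symmetrized KL divergence between N(μ_1,Σ_1) and N(μ_2,Σ_2), namely KL(f_1‖f_2) + KL(f_2‖f_1) = (1/2){tr((Σ_2^{-1}+Σ_1^{-1})δδ^T) + tr((Σ_1 - Σ_2)(Σ_2^{-1} - Σ_1^{-1}))}, is bounded below by c(‖δ‖² + ‖∇‖_F²) for a constant c > 0 depending only on C_e. -/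
/-!
The mean term is the sum of the quadratic forms of `Σ₂⁻¹` and `Σ₁⁻¹` at `δ`, and `Σ ≤ Cₑ` gives
`Σ⁻¹ ≥ Cₑ⁻¹`. For the covariance term, `Σ₁ - Σ₂ = Σ₁ ∇ Σ₂`, so
`tr((Σ₁ - Σ₂)∇) = tr(Σ₁ · ∇Σ₂∇)`; since the trace of a product of positive semidefinite
matrices is nonnegative, each of `Σ₁ ≥ Cₑ⁻¹` and `Σ₂ ≥ Cₑ⁻¹` removes one factor at the cost of
`Cₑ⁻¹`, leaving `Cₑ⁻² tr(∇²) = Cₑ⁻² ‖∇‖_F²`.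
-/

open Matrix

namespace Matrix

variable {n : Type*} [Fintype n]

open scoped ComplexOrder in
theorem PosSemidef.trace_mul_nonneg {𝕜 : Type*} [RCLike 𝕜] {A B : Matrix n n 𝕜}
    (hA : A.PosSemidef) (hB : B.PosSemidef) : 0 ≤ (A * B).trace := by
  classical
  open scoped MatrixOrder Matrix.Norms.L2Operator in
  obtain ⟨C, rfl⟩ := CStarAlgebra.nonneg_iff_eq_star_mul_self.mp hA.nonneg
  rw [star_eq_conjTranspose, ← trace_mul_cycle]
  exact (hB.mul_mul_conjTranspose_same C).trace_nonneg

theorem IsHermitian.trace_mul_self_eq_sum_sq {G : Matrix n n ℝ} (hG : G.IsHermitian) :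
    (G * G).trace = ∑ i, ∑ j, G i j ^ 2 := by
  refine Finset.sum_congr rfl fun i _ => Finset.sum_congr rfl fun j _ => ?_
  change G i j * G j i = G i j ^ 2
  rw [← hG.apply j i, star_trivial, sq]

variable [DecidableEq n]

open scoped ComplexOrder in
theorem PosSemidef.mul_trace_le_trace_mul {𝕜 : Type*} [RCLike 𝕜] {M B : Matrix n n 𝕜} {c : 𝕜}
    (hM : (M - c • 1).PosSemidef) (hB : B.PosSemidef) : c * B.trace ≤ (M * B).trace := by
  have := hM.trace_mul_nonneg hB
  rwa [Matrix.sub_mul, trace_sub, smul_mul, trace_smul, Matrix.one_mul, smul_eq_mul,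
    sub_nonneg] at this

theorem posSemidef_sub_smul_one_of_le {M : Matrix n n ℝ} {c : ℝ} (hM : M.IsHermitian)
    (h : ∀ v, c * (v ⬝ᵥ v) ≤ v ⬝ᵥ (M *ᵥ v)) : (M - c • 1).PosSemidef := by
  refine .of_dotProduct_mulVec_nonneg (hM.sub (isHermitian_one.smul rfl)) fun v => ?_
  simpa [sub_mulVec, smul_mulVec, dotProduct_smul] using h v

theorem PosDef.inv_mul_le_dotProduct_inv_mulVec {S : Matrix n n ℝ} {C : ℝ} (hS : S.PosDef)
    (hC : 0 < C) (hle : ∀ v, v ⬝ᵥ (S *ᵥ v) ≤ C * (v ⬝ᵥ v)) (v : n → ℝ) :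
    C⁻¹ * (v ⬝ᵥ v) ≤ v ⬝ᵥ (S⁻¹ *ᵥ v) := by
  -- expand `0 ≤ (x - C⁻¹ v) ⬝ S (x - C⁻¹ v)` for `x = S⁻¹ v`
  set x := S⁻¹ *ᵥ v
  have hSx : S *ᵥ x = v := by
    rw [mulVec_mulVec, mul_nonsing_inv _ hS.det_pos.ne'.isUnit, one_mulVec]
  have hxSv : x ⬝ᵥ (S *ᵥ v) = v ⬝ᵥ v := by
    rw [dotProduct_mulVec, ← mulVec_transpose, ← conjTranspose_eq_transpose_of_trivial,
      hS.isHermitian.eq, hSx]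
  have hsq : 0 ≤ (x - C⁻¹ • v) ⬝ᵥ (S *ᵥ (x - C⁻¹ • v)) := by
    simpa using hS.posSemidef.dotProduct_mulVec_nonneg (x - C⁻¹ • v)
  have hupper : C⁻¹ * C⁻¹ * (v ⬝ᵥ (S *ᵥ v)) ≤ C⁻¹ * (v ⬝ᵥ v) := by
    calc C⁻¹ * C⁻¹ * (v ⬝ᵥ (S *ᵥ v)) ≤ C⁻¹ * C⁻¹ * (C * (v ⬝ᵥ v)) := by gcongr; exact hle v
      _ = C⁻¹ * (v ⬝ᵥ v) := by field_simp
  simp only [mulVec_sub, mulVec_smul, sub_dotProduct, dotProduct_sub, smul_dotProduct,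
    dotProduct_smul, smul_eq_mul, hSx, hxSv] at hsq
  rw [dotProduct_comm v x]
  linarith

theorem PosDef.sq_mul_trace_le_trace_sub_mul_inv_sub_inv {S₁ S₂ : Matrix n n ℝ} {c : ℝ}
    (hc : 0 ≤ c) (h₁ : S₁.PosDef) (h₂ : S₂.PosDef) (hc₁ : (S₁ - c • 1).PosSemidef)
    (hc₂ : (S₂ - c • 1).PosSemidef) :
    c ^ 2 * ((S₂⁻¹ - S₁⁻¹) * (S₂⁻¹ - S₁⁻¹)).trace ≤ ((S₁ - S₂) * (S₂⁻¹ - S₁⁻¹)).trace := by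
  set G := S₂⁻¹ - S₁⁻¹
  have hG : G.IsHermitian := h₂.inv.isHermitian.sub h₁.inv.isHermitian
  have hfactor : S₁ - S₂ = S₁ * G * S₂ := by
    rw [Matrix.mul_sub, Matrix.sub_mul, mul_nonsing_inv _ h₁.det_pos.ne'.isUnit, Matrix.mul_assoc,
      nonsing_inv_mul _ h₂.det_pos.ne'.isUnit, Matrix.mul_one, Matrix.one_mul]
  have hGG : (G * G).PosSemidef := by
    simpa only [hG.eq] using posSemidef_conjTranspose_mul_self G
  have hGS₂G : (G * (S₂ * G)).PosSemidef := by
    simpa only [hG.eq, Matrix.mul_assoc] using h₂.posSemidef.conjTranspose_mul_mul_same G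
  calc c ^ 2 * (G * G).trace = c * (c * (G * G).trace) := by ring
    _ ≤ c * (S₂ * (G * G)).trace := by gcongr; exact hc₂.mul_trace_le_trace_mul hGG
    _ = c * (G * (S₂ * G)).trace := by rw [trace_mul_cycle']
    _ ≤ (S₁ * (G * (S₂ * G))).trace := hc₁.mul_trace_le_trace_mul hGS₂G
    _ = ((S₁ - S₂) * G).trace := by simp only [hfactor, Matrix.mul_assoc]

end Matrix

/-- The symmetrized Gaussian KL divergence is bounded below by
c(‖δ‖² + ‖∇‖_F²) with c > 0 depending only on Cₑ. -/
theorem stmt13 (Ce : ℝ) (hCe : 1 ≤ Ce) :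
    ∃ c : ℝ, 0 < c ∧
      ∀ (p : ℕ) (μ1 μ2 : Fin p → ℝ) (S1 S2 : Matrix (Fin p) (Fin p) ℝ),
        S1.PosDef → S2.PosDef →
        (∀ v : Fin p → ℝ, Ce⁻¹ * (∑ i, v i ^ 2) ≤ v ⬝ᵥ (S1 *ᵥ v) ∧
          v ⬝ᵥ (S1 *ᵥ v) ≤ Ce * (∑ i, v i ^ 2)) →
        (∀ v : Fin p → ℝ, Ce⁻¹ * (∑ i, v i ^ 2) ≤ v ⬝ᵥ (S2 *ᵥ v) ∧
          v ⬝ᵥ (S2 *ᵥ v) ≤ Ce * (∑ i, v i ^ 2)) →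
        c * ((∑ i, (μ2 i - μ1 i) ^ 2) + ∑ i, ∑ j, ((S2⁻¹ - S1⁻¹) i j) ^ 2) ≤
          (1 / 2) * (((S2⁻¹ + S1⁻¹) *
              Matrix.of (fun i j => (μ2 i - μ1 i) * (μ2 j - μ1 j))).trace
            + ((S1 - S2) * (S2⁻¹ - S1⁻¹)).trace) := by
  have hCe₀ : 0 < Ce := by linarith
  refine ⟨Ce⁻¹ ^ 2 / 2, by positivity, fun p μ1 μ2 S1 S2 h1 h2 hb1 hb2 => ?_⟩
  have hsum_sq (v : Fin p → ℝ) : ∑ i, v i ^ 2 = v ⬝ᵥ v := by simp only [dotProduct, sq]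
  simp only [hsum_sq] at hb1 hb2
  set δ := μ2 - μ1
  have hmean : 2 * Ce⁻¹ * (δ ⬝ᵥ δ) ≤ ((S2⁻¹ + S1⁻¹) * vecMulVec δ δ).trace := by
    rw [mul_vecMulVec, trace_vecMulVec, add_mulVec, add_dotProduct, dotProduct_comm (S2⁻¹ *ᵥ δ),
      dotProduct_comm (S1⁻¹ *ᵥ δ)]
    linarith [h2.inv_mul_le_dotProduct_inv_mulVec hCe₀ (fun v => (hb2 v).2) δ,
      h1.inv_mul_le_dotProduct_inv_mulVec hCe₀ (fun v => (hb1 v).2) δ]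
  have hcov := PosDef.sq_mul_trace_le_trace_sub_mul_inv_sub_inv (inv_nonneg.mpr hCe₀.le) h1 h2
    (posSemidef_sub_smul_one_of_le h1.isHermitian fun v => (hb1 v).1)
    (posSemidef_sub_smul_one_of_le h2.isHermitian fun v => (hb2 v).1)
  rw [(h2.inv.isHermitian.sub h1.inv.isHermitian).trace_mul_self_eq_sum_sq] at hcov
  have hδ : 0 ≤ δ ⬝ᵥ δ := by rw [← hsum_sq]; positivity
  rw [show ∑ i, (μ2 i - μ1 i) ^ 2 = δ ⬝ᵥ δ from hsum_sq δ]
  change _ ≤ 1 / 2 * (((S2⁻¹ + S1⁻¹) * vecMulVec δ δ).trace + _)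
  have hweaken : Ce⁻¹ ^ 2 ≤ 2 * Ce⁻¹ := by
    nlinarith [inv_pos.mpr hCe₀, inv_le_one_of_one_le₀ hCe]
  linarith [mul_le_mul_of_nonneg_right hweaken hδ]
end

section
/- For the Bayes discriminant in the set classification model, the conditional class-1 probability satisfies the logit identity: log(η/(1-η)) = log(π_1/π_2) + m(β_0 + x̄^Tβ + (1/2)x̄^T∇x̄ + (1/2)tr(∇S)), where η = P(Y = 1 | M = m, X_1 = x_1,..., X_m = x_m) under the generative model with Y ⫫ M, priors π_1, π_2, and conditional i.i.d. Gaussian observations. -/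
open Matrix BigOperators Real

/-!
By Bayes' formula the posterior odds `η / (1 - η)` equal `π₁ L₁ / (π₂ L₂)`, where `L_k` is the
class-`k` Gaussian likelihood of the sample; the factor `p_M(m)` cancels because `M` is
independent of `Y`. For a symmetric matrix `A` the parallel-axis identity
`∑ⱼ (xⱼ - μ)ᵀ A (xⱼ - μ) = m ((x̄ - μ)ᵀ A (x̄ - μ) + tr (A S))` shows that `log L_k` is
`m` times a quadratic polynomial in `x̄` plus a multiple of `tr (Σ_k⁻¹ S)`; subtracting the two
classes gives the logit formula.
-/

/-- Density of the multivariate normal N(μ, Σ) with Σ positive definite. -/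
noncomputable def gdens {p : ℕ} (μ : Fin p → ℝ) (Sg : Matrix (Fin p) (Fin p) ℝ)
    (x : Fin p → ℝ) : ℝ :=
  (2 * Real.pi) ^ (-(p : ℝ) / 2) * Sg.det ^ (-(1 : ℝ) / 2) *
    Real.exp (-(1 / 2) * ((x - μ) ⬝ᵥ (Sg⁻¹ *ᵥ (x - μ))))

theorem div_add_div_one_sub_div_add {K : Type*} [Field K] {a b : K} (h : a + b ≠ 0) :
    a / (a + b) / (1 - a / (a + b)) = a / b := by
  rw [one_sub_div h, add_sub_cancel_left, div_div_div_cancel_right₀ h]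

theorem Matrix.IsSymm.dotProduct_mulVec_comm {n R : Type*} [Fintype n] [CommRing R]
    {A : Matrix n n R} (hA : A.IsSymm) (u v : n → R) : u ⬝ᵥ (A *ᵥ v) = v ⬝ᵥ (A *ᵥ u) := by
  rw [dotProduct_comm, ← vecMul_transpose, hA.eq, dotProduct_mulVec]

theorem Matrix.IsSymm.dotProduct_mulVec_add {n R : Type*} [Fintype n] [CommRing R]
    {A : Matrix n n R} (hA : A.IsSymm) (u v : n → R) :
    (u + v) ⬝ᵥ (A *ᵥ (u + v)) = u ⬝ᵥ (A *ᵥ u) + 2 * (u ⬝ᵥ (A *ᵥ v)) + v ⬝ᵥ (A *ᵥ v) := by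
  rw [mulVec_add, add_dotProduct, dotProduct_add, dotProduct_add, hA.dotProduct_mulVec_comm v u]
  ring

section SampleStatistics

variable {m : ℕ} {n : Type*}

-- Also for `m = 0`: the sum is empty and `x / 0 = 0`.
theorem natCast_mul_sum_div (f : Fin m → ℝ) : (m : ℝ) * ((∑ j, f j) / m) = ∑ j, f j :=
  mul_div_cancel_of_imp' fun h => by obtain rfl := Nat.cast_eq_zero.mp h; simp

noncomputable def sampleMean (x : Fin m → n → ℝ) : n → ℝ := fun a => (∑ j, x j a) / m

noncomputable def sampleCov (x : Fin m → n → ℝ) : Matrix n n ℝ :=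
  Matrix.of fun a b => (∑ j, (x j a - sampleMean x a) * (x j b - sampleMean x b)) / m

theorem sum_sub_sampleMean (x : Fin m → n → ℝ) : ∑ j, (x j - sampleMean x) = 0 := by
  funext a
  simp only [Finset.sum_apply, Pi.sub_apply, Finset.sum_sub_distrib, Finset.sum_const,
    Finset.card_univ, Fintype.card_fin, nsmul_eq_mul, sampleMean, natCast_mul_sum_div,
    sub_self, Pi.zero_apply]

theorem trace_mul_sampleCov [Fintype n] (A : Matrix n n ℝ) (x : Fin m → n → ℝ) :
    (A * sampleCov x).trace =
      (∑ j, (x j - sampleMean x) ⬝ᵥ (A *ᵥ (x j - sampleMean x))) / m := by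
  simp only [trace, diag, mul_apply, sampleCov, of_apply, dotProduct, mulVec, Pi.sub_apply,
    Finset.mul_sum, Finset.sum_div, mul_div_assoc']
  rw [Finset.sum_comm (γ := Fin m)]
  refine Finset.sum_congr rfl fun a _ => ?_
  rw [Finset.sum_comm (γ := Fin m)]
  refine Finset.sum_congr rfl fun b _ => Finset.sum_congr rfl fun j _ => ?_
  ring

theorem sum_dotProduct_mulVec_sub_eq [Fintype n] {A : Matrix n n ℝ} (hA : A.IsSymm)
    (x : Fin m → n → ℝ) (μ : n → ℝ) :
    ∑ j, (x j - μ) ⬝ᵥ (A *ᵥ (x j - μ)) =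
      m * ((sampleMean x - μ) ⬝ᵥ (A *ᵥ (sampleMean x - μ)) + (A * sampleCov x).trace) := by
  have hsplit : ∀ j, x j - μ = (x j - sampleMean x) + (sampleMean x - μ) := fun j => by abel
  simp only [hsplit, hA.dotProduct_mulVec_add, Finset.sum_add_distrib, ← Finset.mul_sum,
    ← sum_dotProduct, sum_sub_sampleMean, zero_dotProduct, trace_mul_sampleCov,
    mul_zero, add_zero]
  rw [mul_add, natCast_mul_sum_div, Finset.sum_const, Finset.card_univ, Fintype.card_fin,
    smul_dotProduct, nsmul_eq_mul, add_comm]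

end SampleStatistics

theorem gdens_pos {p : ℕ} (μ : Fin p → ℝ) {Sg : Matrix (Fin p) (Fin p) ℝ} (h : 0 < Sg.det)
    (x : Fin p → ℝ) : 0 < gdens μ Sg x := by
  unfold gdens
  positivity

theorem log_gdens {p : ℕ} (μ : Fin p → ℝ) {Sg : Matrix (Fin p) (Fin p) ℝ} (h : 0 < Sg.det)
    (x : Fin p → ℝ) :
    Real.log (gdens μ Sg x) = -(p / 2) * Real.log (2 * π) - 1 / 2 * Real.log Sg.det
      - 1 / 2 * ((x - μ) ⬝ᵥ (Sg⁻¹ *ᵥ (x - μ))) := by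
  unfold gdens
  rw [Real.log_mul (by positivity) (by positivity), Real.log_mul (by positivity) (by positivity),
    Real.log_rpow (by positivity), Real.log_rpow h, Real.log_exp]
  ring

theorem log_prod_gdens {p m : ℕ} (μ : Fin p → ℝ) {Sg : Matrix (Fin p) (Fin p) ℝ}
    (hSg : Sg.PosDef) (x : Fin m → Fin p → ℝ) :
    Real.log (∏ j, gdens μ Sg (x j)) =
      m * (-(p / 2) * Real.log (2 * π) - 1 / 2 * Real.log Sg.det
        - 1 / 2 * (μ ⬝ᵥ (Sg⁻¹ *ᵥ μ)) + sampleMean x ⬝ᵥ (Sg⁻¹ *ᵥ μ)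
        - 1 / 2 * (sampleMean x ⬝ᵥ (Sg⁻¹ *ᵥ sampleMean x))
        - 1 / 2 * (Sg⁻¹ * sampleCov x).trace) := by
  have hdet := hSg.det_pos
  have hsymm : Sg⁻¹.IsSymm := isHermitian_iff_isSymm.mp hSg.isHermitian.inv
  rw [Real.log_prod fun j _ => (gdens_pos μ hdet (x j)).ne']
  simp only [log_gdens μ hdet, Finset.sum_sub_distrib, ← Finset.mul_sum,
    sum_dotProduct_mulVec_sub_eq hsymm, Finset.sum_const, Finset.card_univ, Fintype.card_fin,
    nsmul_eq_mul, sub_eq_add_neg (sampleMean x) μ, hsymm.dotProduct_mulVec_add, mulVec_neg,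
    dotProduct_neg, neg_dotProduct, neg_neg]
  ring

theorem stmt17_general {p m : ℕ} (π1 π2 : ℝ)
    (hπ1 : 0 < π1) (hπ2 : 0 < π2)
    (pM : ℕ → ℝ) (hpM : 0 < pM m)
    (μ1 μ2 : Fin p → ℝ) (S1 S2 : Matrix (Fin p) (Fin p) ℝ)
    (h1 : S1.PosDef) (h2 : S2.PosDef)
    (x : Fin m → Fin p → ℝ)
    (xbar : Fin p → ℝ) (hxbar : xbar = fun a => (∑ j, x j a) / m)
    (S : Matrix (Fin p) (Fin p) ℝ)
    (hS : S = Matrix.of fun a b => (∑ j, (x j a - xbar a) * (x j b - xbar b)) / m)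
    (β0 : ℝ)
    (hβ0 : β0 = (1 / 2) * (-Real.log (S1.det / S2.det)
      - μ1 ⬝ᵥ (S1⁻¹ *ᵥ μ1) + μ2 ⬝ᵥ (S2⁻¹ *ᵥ μ2)))
    (β : Fin p → ℝ) (hβ : β = S1⁻¹ *ᵥ μ1 - S2⁻¹ *ᵥ μ2)
    (nab : Matrix (Fin p) (Fin p) ℝ) (hnab : nab = S2⁻¹ - S1⁻¹)
    (η : ℝ)
    (hη : η = (π1 * pM m * ∏ j, gdens μ1 S1 (x j)) /
      (π1 * pM m * ∏ j, gdens μ1 S1 (x j)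
        + π2 * pM m * ∏ j, gdens μ2 S2 (x j))) :
    Real.log (η / (1 - η)) =
      Real.log (π1 / π2) + m * (β0 + xbar ⬝ᵥ β
        + (1 / 2) * (xbar ⬝ᵥ (nab *ᵥ xbar)) + (1 / 2) * (nab * S).trace) := by
  obtain rfl : xbar = sampleMean x := hxbar
  obtain rfl : S = sampleCov x := hS
  have hL1 : 0 < ∏ j, gdens μ1 S1 (x j) := Finset.prod_pos fun j _ => gdens_pos μ1 h1.det_pos _
  have hL2 : 0 < ∏ j, gdens μ2 S2 (x j) := Finset.prod_pos fun j _ => gdens_pos μ2 h2.det_pos _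
  rw [hη, div_add_div_one_sub_div_add (by positivity),
    Real.log_div (by positivity) (by positivity), Real.log_mul (by positivity) hL1.ne',
    Real.log_mul (by positivity) hL2.ne', Real.log_mul hπ1.ne' hpM.ne',
    Real.log_mul hπ2.ne' hpM.ne', Real.log_div hπ1.ne' hπ2.ne', log_prod_gdens μ1 h1,
    log_prod_gdens μ2 h2, hβ0, hβ, hnab, Real.log_div h1.det_pos.ne' h2.det_pos.ne']
  simp only [dotProduct_sub, sub_mulVec, sub_mul, trace_sub]
  ring

/-- Logit identity for the conditional class-1 probability η (computed by the
Bayes formula under the generative model with Y ⫫ M and conditionally i.i.d.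
Gaussian observations):
log(η/(1-η)) = log(π₁/π₂) + m(β₀ + x̄ᵀβ + (1/2)x̄ᵀ∇x̄ + (1/2)tr(∇S)). -/
theorem stmt17 {p m : ℕ} (hm : 0 < m) (π1 π2 : ℝ)
    (hπ1 : 0 < π1) (hπ2 : 0 < π2) (hsum : π1 + π2 = 1)
    (pM : ℕ → ℝ) (hpM : 0 < pM m)
    (μ1 μ2 : Fin p → ℝ) (S1 S2 : Matrix (Fin p) (Fin p) ℝ)
    (h1 : S1.PosDef) (h2 : S2.PosDef)
    (x : Fin m → Fin p → ℝ)
    (xbar : Fin p → ℝ) (hxbar : xbar = fun a => (∑ j, x j a) / m)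
    (S : Matrix (Fin p) (Fin p) ℝ)
    (hS : S = Matrix.of fun a b => (∑ j, (x j a - xbar a) * (x j b - xbar b)) / m)
    (β0 : ℝ)
    (hβ0 : β0 = (1 / 2) * (-Real.log (S1.det / S2.det)
      - μ1 ⬝ᵥ (S1⁻¹ *ᵥ μ1) + μ2 ⬝ᵥ (S2⁻¹ *ᵥ μ2)))
    (β : Fin p → ℝ) (hβ : β = S1⁻¹ *ᵥ μ1 - S2⁻¹ *ᵥ μ2)
    (nab : Matrix (Fin p) (Fin p) ℝ) (hnab : nab = S2⁻¹ - S1⁻¹)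
    (η : ℝ)
    (hη : η = (π1 * pM m * ∏ j, gdens μ1 S1 (x j)) /
      (π1 * pM m * ∏ j, gdens μ1 S1 (x j)
        + π2 * pM m * ∏ j, gdens μ2 S2 (x j))) :
    Real.log (η / (1 - η)) =
      Real.log (π1 / π2) + m * (β0 + xbar ⬝ᵥ β
        + (1 / 2) * (xbar ⬝ᵥ (nab *ᵥ xbar)) + (1 / 2) * (nab * S).trace) :=
  stmt17_general π1 π2 hπ1 hπ2 pM hpM μ1 μ2 S1 S2 h1 h2 x xbar hxbar S hS β0 hβ0 β hβ nab hnab η hη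
end
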